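/- arXiv:2102.05304 — 2 statements merged into one kernel-verified Lean document; each statement's English description precedes it below -/
import Mathlib

section
/- Let R_1, …, R_n be a rectangular floorplan of a rectangle R = [A,B] × [C,D]. Suppose a rectangle R_i of the floorplan meets the boundary of R in an infinite set that is contained in exactly one side of R and contains no corner point of R. Then R_i is adjacent to at least 3 other rectangles of the floorplan. -/
open Set

/-- The closed axis-aligned rectangle `[a,b] × [c,d]` in the plane. -/
def Rect (a b c d : ℝ) : Set (ℝ × ℝ) := Set.Icc a b ×ˢ Set.Icc c d

/-- `IsRFP A B C D a b c d` says that the family of rectangles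
`[a k, b k] × [c k, d k]` is a rectangular floorplan of `[A,B] × [C,D]`:
each member is a nondegenerate rectangle, their union is the big rectangle,
their (open) interiors are pairwise disjoint, and no point lies in four of them. -/
def IsRFP {ι : Type*} [Fintype ι] (A B C D : ℝ) (a b c d : ι → ℝ) : Prop :=
  A < B ∧ C < D ∧
  (∀ k, a k < b k ∧ c k < d k) ∧
  (⋃ k, Rect (a k) (b k) (c k) (d k)) = Rect A B C D ∧
  ((Set.univ : Set ι).Pairwise fun i j =>
    Disjoint (Set.Ioo (a i) (b i) ×ˢ Set.Ioo (c i) (d i))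
             (Set.Ioo (a j) (b j) ×ˢ Set.Ioo (c j) (d j))) ∧
  (∀ p : ℝ × ℝ, {k : ι | p ∈ Rect (a k) (b k) (c k) (d k)}.ncard ≤ 3)

/-- The adjacency graph of a family of rectangles: `i ~ j` iff `i ≠ j` and
the intersection of the two rectangles contains more than one point. -/
def adjGraph {ι : Type*} (a b c d : ι → ℝ) : SimpleGraph ι :=
  SimpleGraph.fromRel fun i j =>
    (Rect (a i) (b i) (c i) (d i) ∩ Rect (a j) (b j) (c j) (d j)).Nontrivial

lemma mem_rect {a b c d : ℝ} {p : ℝ × ℝ} :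
    p ∈ Rect a b c d ↔ a ≤ p.1 ∧ p.1 ≤ b ∧ c ≤ p.2 ∧ p.2 ≤ d := by
  rw [Rect, Set.mem_prod, mem_Icc, mem_Icc]; tauto

lemma nontrivial_preimage {α β : Type*} {f : α → β} (hf : Function.Bijective f)
    {s : Set β} : (f ⁻¹' s).Nontrivial ↔ s.Nontrivial := by
  constructor
  · rintro ⟨x, hx, y, hy, hxy⟩
    exact ⟨f x, hx, f y, hy, fun h => hxy (hf.1 h)⟩
  · rintro ⟨x, hx, y, hy, hxy⟩
    obtain ⟨x', rfl⟩ := hf.2 x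
    obtain ⟨y', rfl⟩ := hf.2 y
    exact ⟨x', hx, y', hy, fun h => hxy (by rw [h])⟩

lemma keyY (a b c d : ℝ) (p : ℝ × ℝ) :
    p ∈ Rect a b (-d) (-c) ↔ ((p.1, -p.2) : ℝ × ℝ) ∈ Rect a b c d := by
  simp only [mem_rect]
  constructor <;> rintro ⟨h1, h2, h3, h4⟩ <;> exact ⟨h1, h2, by linarith, by linarith⟩

lemma keyS (a b c d : ℝ) (p : ℝ × ℝ) :
    p ∈ Rect c d a b ↔ ((p.2, p.1) : ℝ × ℝ) ∈ Rect a b c d := by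
  simp only [mem_rect]
  constructor <;> rintro ⟨h1, h2, h3, h4⟩ <;> exact ⟨h3, h4, h1, h2⟩

lemma keyYo (a b c d : ℝ) :
    Ioo a b ×ˢ Ioo (-d) (-c) = (fun p : ℝ × ℝ => (p.1, -p.2)) ⁻¹' (Ioo a b ×ˢ Ioo c d) := by
  ext ⟨x, y⟩
  simp only [Set.mem_prod, mem_Ioo, mem_preimage]
  constructor <;> rintro ⟨⟨h1, h2⟩, h3, h4⟩ <;> exact ⟨⟨h1, h2⟩, by linarith, by linarith⟩

lemma keySo (a b c d : ℝ) :
    Ioo c d ×ˢ Ioo a b = (fun p : ℝ × ℝ => (p.2, p.1)) ⁻¹' (Ioo a b ×ˢ Ioo c d) := by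
  ext ⟨x, y⟩
  simp only [Set.mem_prod, mem_Ioo, mem_preimage]
  tauto

lemma IsRFP_negY {n : ℕ} {A B C D : ℝ} {a b c d : Fin n → ℝ}
    (h : IsRFP A B C D a b c d) :
    IsRFP A B (-D) (-C) a b (fun k => -(d k)) (fun k => -(c k)) := by
  obtain ⟨h1, h2, h3, h4, h5, h6⟩ := h
  refine ⟨h1, by linarith, fun k => ⟨(h3 k).1, neg_lt_neg (h3 k).2⟩, ?_, ?_, ?_⟩
  · ext p
    simp only [mem_iUnion, keyY]
    rw [← mem_iUnion, h4, ← keyY]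
  · intro i _ j _ hij
    simp only
    rw [keyYo, keyYo]
    exact (h5 (mem_univ i) (mem_univ j) hij).preimage _
  · intro p
    have : {k : Fin n | p ∈ Rect (a k) (b k) (-(d k)) (-(c k))} =
        {k : Fin n | ((p.1, -p.2) : ℝ × ℝ) ∈ Rect (a k) (b k) (c k) (d k)} := by
      ext k; exact keyY _ _ _ _ _
    rw [this]
    exact h6 _

lemma IsRFP_swap {n : ℕ} {A B C D : ℝ} {a b c d : Fin n → ℝ}
    (h : IsRFP A B C D a b c d) : IsRFP C D A B c d a b := by
  obtain ⟨h1, h2, h3, h4, h5, h6⟩ := h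
  refine ⟨h2, h1, fun k => ⟨(h3 k).2, (h3 k).1⟩, ?_, ?_, ?_⟩
  · ext p
    constructor
    · intro hp
      rw [mem_iUnion] at hp
      obtain ⟨k, hk⟩ := hp
      rw [keyS] at hk
      rw [keyS, ← h4, mem_iUnion]
      exact ⟨k, hk⟩
    · intro hp
      rw [keyS, ← h4, mem_iUnion] at hp
      obtain ⟨k, hk⟩ := hp
      rw [mem_iUnion]
      exact ⟨k, (keyS _ _ _ _ _).2 hk⟩
  · intro i _ j _ hij
    have hd := h5 (mem_univ i) (mem_univ j) hij
    rw [Set.disjoint_left]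
    rintro ⟨x, y⟩ hxy hxy'
    have m1 : ((y, x) : ℝ × ℝ) ∈ Ioo (a i) (b i) ×ˢ Ioo (c i) (d i) := by
      simp only [Set.mem_prod] at hxy ⊢; exact ⟨hxy.2, hxy.1⟩
    have m2 : ((y, x) : ℝ × ℝ) ∈ Ioo (a j) (b j) ×ˢ Ioo (c j) (d j) := by
      simp only [Set.mem_prod] at hxy' ⊢; exact ⟨hxy'.2, hxy'.1⟩
    exact Set.disjoint_left.mp hd m1 m2
  · intro p
    have : {k : Fin n | p ∈ Rect (c k) (d k) (a k) (b k)} =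
        {k : Fin n | ((p.2, p.1) : ℝ × ℝ) ∈ Rect (a k) (b k) (c k) (d k)} := by
      ext k; exact keyS _ _ _ _ _
    rw [this]
    exact h6 _

lemma pigeon {n : ℕ} {A B C D : ℝ} {a b c d : Fin n → ℝ}
    (hcover : (⋃ k, Rect (a k) (b k) (c k) (d k)) = Rect A B C D)
    (p : ℕ → ℝ × ℝ) (hp : ∀ m, p m ∈ Rect A B C D) :
    ∃ j, {m : ℕ | p m ∈ Rect (a j) (b j) (c j) (d j)}.Infinite := by
  have hmem : ∀ m, ∃ k, p m ∈ Rect (a k) (b k) (c k) (d k) := by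
    intro m
    have := hp m
    rw [← hcover, mem_iUnion] at this
    exact this
  choose f hf using hmem
  have : Nonempty (Fin n) := ⟨f 0⟩
  obtain ⟨j, hj⟩ := Finite.exists_infinite_fiber f
  refine ⟨j, (Set.infinite_coe_iff.1 hj).mono ?_⟩
  intro m hm
  simp only [mem_preimage, mem_singleton_iff] at hm
  simpa [← hm] using hf m

lemma seq_small {L : ℝ} (hL : 0 < L) {S : Set ℕ} (hS : S.Infinite) {ε : ℝ} (hε : 0 < ε) :
    ∃ m ∈ S, L / (m + 1) < ε := by
  obtain ⟨N, hN⟩ := exists_nat_gt (L / ε)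
  obtain ⟨m, hm, hNm⟩ := hS.exists_gt N
  refine ⟨m, hm, ?_⟩
  rw [div_lt_iff₀ (by positivity)]
  rw [div_lt_iff₀ hε] at hN
  have h1 : (N : ℝ) < m := by exact_mod_cast hNm
  nlinarith

lemma mem_rect' {a b c d x y : ℝ} :
    ((x, y) : ℝ × ℝ) ∈ Rect a b c d ↔ a ≤ x ∧ x ≤ b ∧ c ≤ y ∧ y ≤ d := mem_rect

lemma mem_oRect {a b c d x y : ℝ} (h1 : a < x) (h2 : x < b) (h3 : c < y) (h4 : y < d) :
    ((x, y) : ℝ × ℝ) ∈ Set.Ioo a b ×ˢ Set.Ioo c d := Set.mk_mem_prod ⟨h1, h2⟩ ⟨h3, h4⟩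

lemma core {n : ℕ} (A B C D : ℝ) (a b c d : Fin n → ℝ)
    (h : IsRFP A B C D a b c d) (i : Fin n)
    (hci : c i = C) (hai : A < a i) (hbi : b i < B) (hdi : d i < D) :
    3 ≤ {j : Fin n | j ≠ i ∧
      (Rect (a i) (b i) (c i) (d i) ∩ Rect (a j) (b j) (c j) (d j)).Nontrivial}.ncard := by
  obtain ⟨hAB, hCD, hnd, hcover, hdisj, -⟩ := h
  have hab := (hnd i).1
  have hcd := (hnd i).2
  have hCdi : C < d i := hci ▸ hcd
  -- choose a generic height m0 and a generic abscissa x0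
  obtain ⟨m0, hm0I, hm0F⟩ := (Set.Ioo_infinite hCdi).exists_notMem_finset
    (Finset.image c Finset.univ ∪ Finset.image d Finset.univ)
  obtain ⟨hm0C, hm0d⟩ := hm0I
  have hm0c : ∀ k, c k ≠ m0 := by
    intro k he
    exact hm0F (he ▸ Finset.mem_union_left _ (Finset.mem_image_of_mem c (Finset.mem_univ k)))
  have hm0d' : ∀ k, d k ≠ m0 := by
    intro k he
    exact hm0F (he ▸ Finset.mem_union_right _ (Finset.mem_image_of_mem d (Finset.mem_univ k)))
  obtain ⟨x0, hx0I, hx0G⟩ := (Set.Ioo_infinite hab).exists_notMem_finset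
    (Finset.image a Finset.univ ∪ Finset.image b Finset.univ)
  obtain ⟨hx0a, hx0b⟩ := hx0I
  have hx0A : ∀ k, a k ≠ x0 := by
    intro k he
    exact hx0G (he ▸ Finset.mem_union_left _ (Finset.mem_image_of_mem a (Finset.mem_univ k)))
  have hx0B : ∀ k, b k ≠ x0 := by
    intro k he
    exact hx0G (he ▸ Finset.mem_union_right _ (Finset.mem_image_of_mem b (Finset.mem_univ k)))
  have hcim0 : c i < m0 := by rw [hci]; exact hm0C
  -- LEFT NEIGHBOR
  have hpL : ∀ m : ℕ, ((a i - (a i - A) / (m + 1), m0) : ℝ × ℝ) ∈ Rect A B C D := by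
    intro m
    have h1 : (0 : ℝ) < (m : ℝ) + 1 := by positivity
    have h2 : (a i - A) / (m + 1) ≤ a i - A := div_le_self (by linarith) (by linarith)
    have h3 : 0 < (a i - A) / (m + 1) := div_pos (by linarith) (by positivity)
    exact mem_rect'.2 ⟨by linarith, by linarith, by linarith, by linarith⟩
  obtain ⟨jL, hjL⟩ := pigeon hcover _ hpL
  obtain ⟨m1, hm1⟩ := hjL.nonempty
  rw [mem_setOf_eq, mem_rect'] at hm1
  have htpos : (0 : ℝ) < (a i - A) / (m1 + 1) := div_pos (by linarith) (by positivity)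
  have haL : a jL < a i := by linarith [hm1.1]
  have hcL : c jL < m0 := lt_of_le_of_ne hm1.2.2.1 (hm0c jL)
  have hdL : m0 < d jL := lt_of_le_of_ne hm1.2.2.2 (Ne.symm (hm0d' jL))
  have hbL : a i ≤ b jL := by
    by_contra hcon
    push_neg at hcon
    obtain ⟨m2, hm2, hlt⟩ := seq_small (by linarith : (0 : ℝ) < a i - A) hjL
      (by linarith : (0 : ℝ) < a i - b jL)
    rw [mem_setOf_eq, mem_rect'] at hm2
    linarith [hm2.2.1]
  have hne_iL : jL ≠ i := fun he => absurd haL (by rw [he]; exact lt_irrefl _)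
  have hy1L : max C (c jL) < m0 := max_lt hm0C hcL
  have hy2L : m0 < min (d i) (d jL) := lt_min hm0d hdL
  have hadjL : (Rect (a i) (b i) (c i) (d i) ∩ Rect (a jL) (b jL) (c jL) (d jL)).Nontrivial := by
    refine ⟨(a i, max C (c jL)), ⟨mem_rect'.2 ⟨le_refl _, hab.le, ?_, ?_⟩,
        mem_rect'.2 ⟨haL.le, hbL, le_max_right _ _, ?_⟩⟩,
      (a i, min (d i) (d jL)), ⟨mem_rect'.2 ⟨le_refl _, hab.le, ?_, min_le_left _ _⟩,
        mem_rect'.2 ⟨haL.le, hbL, ?_, min_le_right _ _⟩⟩, ?_⟩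
    · rw [hci]; exact le_max_left _ _
    · linarith
    · linarith
    · linarith
    · linarith
    · intro he
      injection he with h1 h2
      linarith
  -- RIGHT NEIGHBOR
  have hpR : ∀ m : ℕ, ((b i + (B - b i) / (m + 1), m0) : ℝ × ℝ) ∈ Rect A B C D := by
    intro m
    have h1 : (0 : ℝ) < (m : ℝ) + 1 := by positivity
    have h2 : (B - b i) / (m + 1) ≤ B - b i := div_le_self (by linarith) (by linarith)
    have h3 : 0 < (B - b i) / (m + 1) := div_pos (by linarith) (by positivity)
    exact mem_rect'.2 ⟨by linarith, by linarith, by linarith, by linarith⟩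
  obtain ⟨jR, hjR⟩ := pigeon hcover _ hpR
  obtain ⟨m1', hm1'⟩ := hjR.nonempty
  rw [mem_setOf_eq, mem_rect'] at hm1'
  have htpos' : (0 : ℝ) < (B - b i) / (m1' + 1) := div_pos (by linarith) (by positivity)
  have hbR : b i < b jR := by linarith [hm1'.2.1]
  have hcR : c jR < m0 := lt_of_le_of_ne hm1'.2.2.1 (hm0c jR)
  have hdR : m0 < d jR := lt_of_le_of_ne hm1'.2.2.2 (Ne.symm (hm0d' jR))
  have haR : a jR ≤ b i := by
    by_contra hcon
    push_neg at hcon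
    obtain ⟨m2, hm2, hlt⟩ := seq_small (by linarith : (0 : ℝ) < B - b i) hjR
      (by linarith : (0 : ℝ) < a jR - b i)
    rw [mem_setOf_eq, mem_rect'] at hm2
    linarith [hm2.1]
  have hne_iR : jR ≠ i := fun he => absurd hbR (by rw [he]; exact lt_irrefl _)
  have hy1R : max C (c jR) < m0 := max_lt hm0C hcR
  have hy2R : m0 < min (d i) (d jR) := lt_min hm0d hdR
  have hadjR : (Rect (a i) (b i) (c i) (d i) ∩ Rect (a jR) (b jR) (c jR) (d jR)).Nontrivial := by
    refine ⟨(b i, max C (c jR)), ⟨mem_rect'.2 ⟨hab.le, le_refl _, ?_, ?_⟩,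
        mem_rect'.2 ⟨haR, hbR.le, le_max_right _ _, ?_⟩⟩,
      (b i, min (d i) (d jR)), ⟨mem_rect'.2 ⟨hab.le, le_refl _, ?_, min_le_left _ _⟩,
        mem_rect'.2 ⟨haR, hbR.le, ?_, min_le_right _ _⟩⟩, ?_⟩
    · rw [hci]; exact le_max_left _ _
    · linarith
    · linarith
    · linarith
    · linarith
    · intro he
      injection he with h1 h2
      linarith
  -- TOP NEIGHBOR
  have hpT : ∀ m : ℕ, ((x0, d i + (D - d i) / (m + 1)) : ℝ × ℝ) ∈ Rect A B C D := by
    intro m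
    have h1 : (0 : ℝ) < (m : ℝ) + 1 := by positivity
    have h2 : (D - d i) / (m + 1) ≤ D - d i := div_le_self (by linarith) (by linarith)
    have h3 : 0 < (D - d i) / (m + 1) := div_pos (by linarith) (by positivity)
    exact mem_rect'.2 ⟨by linarith, by linarith, by linarith, by linarith⟩
  obtain ⟨jT, hjT⟩ := pigeon hcover _ hpT
  obtain ⟨m1'', hm1''⟩ := hjT.nonempty
  rw [mem_setOf_eq, mem_rect'] at hm1''
  have htpos'' : (0 : ℝ) < (D - d i) / (m1'' + 1) := div_pos (by linarith) (by positivity)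
  have hdT : d i < d jT := by linarith [hm1''.2.2.2]
  have haT : a jT < x0 := lt_of_le_of_ne hm1''.1 (hx0A jT)
  have hbT : x0 < b jT := lt_of_le_of_ne hm1''.2.1 (fun he => hx0B jT he.symm)
  have hcT : c jT ≤ d i := by
    by_contra hcon
    push_neg at hcon
    obtain ⟨m2, hm2, hlt⟩ := seq_small (by linarith : (0 : ℝ) < D - d i) hjT
      (by linarith : (0 : ℝ) < c jT - d i)
    rw [mem_setOf_eq, mem_rect'] at hm2
    linarith [hm2.2.2.1]
  have hne_iT : jT ≠ i := fun he => absurd hdT (by rw [he]; exact lt_irrefl _)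
  have hx1T : max (a i) (a jT) < x0 := max_lt hx0a haT
  have hx2T : x0 < min (b i) (b jT) := lt_min hx0b hbT
  have hadjT : (Rect (a i) (b i) (c i) (d i) ∩ Rect (a jT) (b jT) (c jT) (d jT)).Nontrivial := by
    refine ⟨(max (a i) (a jT), d i), ⟨mem_rect'.2 ⟨le_max_left _ _, by linarith, hcd.le, le_refl _⟩,
        mem_rect'.2 ⟨le_max_right _ _, by linarith, hcT, hdT.le⟩⟩,
      (min (b i) (b jT), d i), ⟨mem_rect'.2 ⟨by linarith, min_le_left _ _, hcd.le, le_refl _⟩,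
        mem_rect'.2 ⟨by linarith, min_le_right _ _, hcT, hdT.le⟩⟩, ?_⟩
    intro he
    injection he with h1 h2
    linarith
  -- the three neighbors are pairwise distinct
  have hLR : jL ≠ jR := by
    intro he
    have hb' : b i < b jL := by rw [he]; exact hbR
    have hd := hdisj (mem_univ i) (mem_univ jL) (Ne.symm hne_iL)
    exact Set.disjoint_left.mp hd
      (mem_oRect (x := (a i + b i) / 2) (y := m0)
        (by linarith) (by linarith) (by linarith) (by linarith))
      (mem_oRect (by linarith) (by linarith) (by linarith) (by linarith))
  have hLT : jL ≠ jT := by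
    intro he
    have hb' : x0 < b jL := by rw [he]; exact hbT
    have hd' : d i < d jL := by rw [he]; exact hdT
    have hmin : a i < min (b i) (b jL) := lt_min hab (by linarith)
    have hmax : max C (c jL) < d i := max_lt hCdi (by linarith)
    have e1 : min (b i) (b jL) ≤ b i := min_le_left _ _
    have e2 : min (b i) (b jL) ≤ b jL := min_le_right _ _
    have e3 : C ≤ max C (c jL) := le_max_left _ _
    have e4 : c jL ≤ max C (c jL) := le_max_right _ _
    have hd := hdisj (mem_univ i) (mem_univ jL) (Ne.symm hne_iL)
    exact Set.disjoint_left.mp hd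
      (mem_oRect (x := (a i + min (b i) (b jL)) / 2) (y := (max C (c jL) + d i) / 2)
        (by linarith) (by linarith) (by linarith) (by linarith))
      (mem_oRect (by linarith) (by linarith) (by linarith) (by linarith))
  have hRT : jR ≠ jT := by
    intro he
    have ha' : a jR < x0 := by rw [he]; exact haT
    have hd' : d i < d jR := by rw [he]; exact hdT
    have hmax1 : max (a i) (a jR) < b i := max_lt hab (by linarith)
    have hmax : max C (c jR) < d i := max_lt hCdi (by linarith)
    have e1 : a i ≤ max (a i) (a jR) := le_max_left _ _
    have e2 : a jR ≤ max (a i) (a jR) := le_max_right _ _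
    have e3 : C ≤ max C (c jR) := le_max_left _ _
    have e4 : c jR ≤ max C (c jR) := le_max_right _ _
    have hd := hdisj (mem_univ i) (mem_univ jR) (Ne.symm hne_iR)
    exact Set.disjoint_left.mp hd
      (mem_oRect (x := (max (a i) (a jR) + b i) / 2) (y := (max C (c jR) + d i) / 2)
        (by linarith) (by linarith) (by linarith) (by linarith))
      (mem_oRect (by linarith) (by linarith) (by linarith) (by linarith))
  -- conclude
  have hsub : ({jL, jR, jT} : Set (Fin n)) ⊆ {j : Fin n | j ≠ i ∧
      (Rect (a i) (b i) (c i) (d i) ∩ Rect (a j) (b j) (c j) (d j)).Nontrivial} := by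
    intro j hj
    simp only [Set.mem_insert_iff, Set.mem_singleton_iff] at hj
    rcases hj with rfl | rfl | rfl
    · exact ⟨hne_iL, hadjL⟩
    · exact ⟨hne_iR, hadjR⟩
    · exact ⟨hne_iT, hadjT⟩
  have h3 : ({jL, jR, jT} : Set (Fin n)).ncard = 3 :=
    Set.ncard_eq_three.2 ⟨jL, jR, jT, hLR, hLT, hRT, rfl⟩
  calc (3 : ℕ) = ({jL, jR, jT} : Set (Fin n)).ncard := h3.symm
    _ ≤ _ := Set.ncard_le_ncard hsub (Set.toFinite _)

lemma ncard_adj_eq {n : ℕ} (a b c d a' b' c' d' : Fin n → ℝ) (i : Fin n)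
    (f : ℝ × ℝ → ℝ × ℝ) (hf : Function.Bijective f)
    (hk : ∀ (k : Fin n) (p : ℝ × ℝ),
      p ∈ Rect (a' k) (b' k) (c' k) (d' k) ↔ f p ∈ Rect (a k) (b k) (c k) (d k)) :
    {j : Fin n | j ≠ i ∧
      (Rect (a' i) (b' i) (c' i) (d' i) ∩ Rect (a' j) (b' j) (c' j) (d' j)).Nontrivial}
    = {j : Fin n | j ≠ i ∧
      (Rect (a i) (b i) (c i) (d i) ∩ Rect (a j) (b j) (c j) (d j)).Nontrivial} := by
  ext j
  simp only [mem_setOf_eq]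
  refine and_congr_right fun _ => ?_
  have hEq : Rect (a' i) (b' i) (c' i) (d' i) ∩ Rect (a' j) (b' j) (c' j) (d' j)
      = f ⁻¹' (Rect (a i) (b i) (c i) (d i) ∩ Rect (a j) (b j) (c j) (d j)) := by
    rw [Set.preimage_inter]
    refine congrArg₂ _ ?_ ?_ <;> (ext p; rw [mem_preimage]; exact hk _ p)
  rw [hEq, nontrivial_preimage hf]

/-- A rectangle of a floorplan that meets the boundary of the big rectangle in
an infinite set contained in exactly one side and containing no corner is
adjacent to at least 3 other rectangles. -/
theorem stmt_4 {n : ℕ} (A B C D : ℝ) (a b c d : Fin n → ℝ)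
    (h : IsRFP A B C D a b c d) (i : Fin n)
    (hinf : (Rect (a i) (b i) (c i) (d i) ∩ frontier (Rect A B C D)).Infinite)
    (hside : ∃! S : Set (ℝ × ℝ),
      S ∈ ({Set.Icc A B ×ˢ ({C} : Set ℝ), Set.Icc A B ×ˢ ({D} : Set ℝ),
            ({A} : Set ℝ) ×ˢ Set.Icc C D, ({B} : Set ℝ) ×ˢ Set.Icc C D} :
            Set (Set (ℝ × ℝ))) ∧
      Rect (a i) (b i) (c i) (d i) ∩ frontier (Rect A B C D) ⊆ S)
    (hcor : ∀ p ∈ Rect (a i) (b i) (c i) (d i) ∩ frontier (Rect A B C D),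
      p ∉ ({(A, C), (A, D), (B, C), (B, D)} : Set (ℝ × ℝ))) :
    3 ≤ {j : Fin n | j ≠ i ∧
      (Rect (a i) (b i) (c i) (d i) ∩ Rect (a j) (b j) (c j) (d j)).Nontrivial}.ncard := by
  obtain ⟨S, ⟨hSmem, hSsub⟩, -⟩ := hside
  obtain ⟨hAB, hCD, hnd, hcover, -, -⟩ := id h
  have hab := (hnd i).1
  have hcd := (hnd i).2
  have hsubR : Rect (a i) (b i) (c i) (d i) ⊆ Rect A B C D := by
    rw [← hcover]
    exact subset_iUnion (fun k => Rect (a k) (b k) (c k) (d k)) i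
  have h1 := mem_rect'.1 (hsubR (mem_rect'.2 ⟨le_refl _, hab.le, le_refl _, hcd.le⟩))
  have h2 := mem_rect'.1 (hsubR (mem_rect'.2 ⟨hab.le, le_refl _, hcd.le, le_refl _⟩))
  have hAa : A ≤ a i := h1.1
  have hbB : b i ≤ B := h2.2.1
  have hCc : C ≤ c i := h1.2.2.1
  have hdD : d i ≤ D := h2.2.2.2
  have hfr : ∀ p : ℝ × ℝ,
      p ∈ frontier (Rect A B C D) ↔ p ∈ Rect A B C D ∧ p ∉ Ioo A B ×ˢ Ioo C D := by
    intro p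
    rw [Rect, (isClosed_Icc.prod isClosed_Icc).frontier_eq, interior_prod_eq,
      interior_Icc, interior_Icc]
    exact Iff.rfl
  have hfrmem : ∀ x y : ℝ, A ≤ x → x ≤ B → C ≤ y → y ≤ D →
      (x = A ∨ x = B ∨ y = C ∨ y = D) → ((x, y) : ℝ × ℝ) ∈ frontier (Rect A B C D) := by
    intro x y hx1 hx2 hy1 hy2 h5
    rw [hfr]
    refine ⟨mem_rect'.2 ⟨hx1, hx2, hy1, hy2⟩, ?_⟩
    rintro ⟨⟨u1, u2⟩, u3, u4⟩
    rcases h5 with h5 | h5 | h5 | h5 <;> linarith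
  obtain ⟨p0, hp0R, hp0F⟩ := hinf.nonempty
  have hp0big := mem_rect.1 hp0R
  simp only [Set.mem_insert_iff, Set.mem_singleton_iff] at hSmem
  rcases hSmem with rfl | rfl | rfl | rfl
  · -- bottom side y = C
    have hy : ∀ p ∈ Rect (a i) (b i) (c i) (d i) ∩ frontier (Rect A B C D), p.2 = C :=
      fun p hp => (hSsub hp).2
    have hci : c i = C := le_antisymm (by have := hy p0 ⟨hp0R, hp0F⟩; linarith [hp0big.2.2.1]) hCc
    have hai : A < a i := by
      rcases lt_or_eq_of_le hAa with h' | h'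
      · exact h'
      · exfalso
        refine hcor (A, C) ⟨mem_rect'.2 ⟨h'.ge, by linarith, hci.le, by linarith⟩,
          hfrmem A C (le_refl _) hAB.le (le_refl _) hCD.le (Or.inl rfl)⟩ ?_
        simp
    have hbi : b i < B := by
      rcases lt_or_eq_of_le hbB with h' | h'
      · exact h'
      · exfalso
        refine hcor (B, C) ⟨mem_rect'.2 ⟨by linarith, h'.ge, hci.le, by linarith⟩,
          hfrmem B C hAB.le (le_refl _) (le_refl _) hCD.le (Or.inr (Or.inl rfl))⟩ ?_
        simp
    have hdi : d i < D := by
      rcases lt_or_eq_of_le hdD with h' | h'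
      · exact h'
      · exfalso
        have hmem : ((a i, D) : ℝ × ℝ) ∈ Rect (a i) (b i) (c i) (d i) ∩
            frontier (Rect A B C D) :=
          ⟨mem_rect'.2 ⟨le_refl _, hab.le, by linarith, h'.ge⟩,
            hfrmem (a i) D hAa (by linarith) hCD.le (le_refl _) (Or.inr (Or.inr (Or.inr rfl)))⟩
        have := hy _ hmem
        simp only at this
        linarith
    exact core A B C D a b c d h i hci hai hbi hdi
  · -- top side y = D
    have hy : ∀ p ∈ Rect (a i) (b i) (c i) (d i) ∩ frontier (Rect A B C D), p.2 = D :=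
      fun p hp => (hSsub hp).2
    have hdi : d i = D := le_antisymm hdD (by have := hy p0 ⟨hp0R, hp0F⟩; linarith [hp0big.2.2.2])
    have hai : A < a i := by
      rcases lt_or_eq_of_le hAa with h' | h'
      · exact h'
      · exfalso
        refine hcor (A, D) ⟨mem_rect'.2 ⟨h'.ge, by linarith, by linarith, hdi.ge⟩,
          hfrmem A D (le_refl _) hAB.le hCD.le (le_refl _) (Or.inl rfl)⟩ ?_
        simp
    have hbi : b i < B := by
      rcases lt_or_eq_of_le hbB with h' | h'
      · exact h'
      · exfalso
        refine hcor (B, D) ⟨mem_rect'.2 ⟨by linarith, h'.ge, by linarith, hdi.ge⟩,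
          hfrmem B D hAB.le (le_refl _) hCD.le (le_refl _) (Or.inr (Or.inl rfl))⟩ ?_
        simp
    have hci : C < c i := by
      rcases lt_or_eq_of_le hCc with h' | h'
      · exact h'
      · exfalso
        have hmem : ((a i, C) : ℝ × ℝ) ∈ Rect (a i) (b i) (c i) (d i) ∩
            frontier (Rect A B C D) :=
          ⟨mem_rect'.2 ⟨le_refl _, hab.le, h'.ge, by linarith⟩,
            hfrmem (a i) C hAa (by linarith) (le_refl _) hCD.le (Or.inr (Or.inr (Or.inl rfl)))⟩
        have := hy _ hmem
        simp only at this
        linarith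
    have hres := core A B (-D) (-C) a b (fun k => -(d k)) (fun k => -(c k))
      (IsRFP_negY h) i (by simp [hdi]) hai hbi (by simp; linarith)
    have hEq := ncard_adj_eq a b c d a b (fun k => -(d k)) (fun k => -(c k)) i
      (fun p : ℝ × ℝ => (p.1, -p.2))
      (Function.Involutive.bijective (fun p => by simp))
      (fun k p => keyY _ _ _ _ p)
    exact le_trans hres (le_of_eq (congrArg Set.ncard hEq))
  · -- left side x = A
    have hx : ∀ p ∈ Rect (a i) (b i) (c i) (d i) ∩ frontier (Rect A B C D), p.1 = A :=
      fun p hp => (hSsub hp).1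
    have hai : a i = A := le_antisymm (by have := hx p0 ⟨hp0R, hp0F⟩; linarith [hp0big.1]) hAa
    have hci : C < c i := by
      rcases lt_or_eq_of_le hCc with h' | h'
      · exact h'
      · exfalso
        refine hcor (A, C) ⟨mem_rect'.2 ⟨hai.le, by linarith, h'.ge, by linarith⟩,
          hfrmem A C (le_refl _) hAB.le (le_refl _) hCD.le (Or.inl rfl)⟩ ?_
        simp
    have hdi : d i < D := by
      rcases lt_or_eq_of_le hdD with h' | h'
      · exact h'
      · exfalso
        refine hcor (A, D) ⟨mem_rect'.2 ⟨hai.le, by linarith, by linarith, h'.ge⟩,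
          hfrmem A D (le_refl _) hAB.le hCD.le (le_refl _) (Or.inl rfl)⟩ ?_
        simp
    have hbi : b i < B := by
      rcases lt_or_eq_of_le hbB with h' | h'
      · exact h'
      · exfalso
        have hmem : ((B, c i) : ℝ × ℝ) ∈ Rect (a i) (b i) (c i) (d i) ∩
            frontier (Rect A B C D) :=
          ⟨mem_rect'.2 ⟨by linarith, h'.ge, le_refl _, hcd.le⟩,
            hfrmem B (c i) hAB.le (le_refl _) hCc (by linarith) (Or.inr (Or.inl rfl))⟩
        have := hx _ hmem
        simp only at this
        linarith
    have hres := core C D A B c d a b (IsRFP_swap h) i hai hci hdi hbi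
    have hEq := ncard_adj_eq a b c d c d a b i
      (fun p : ℝ × ℝ => (p.2, p.1))
      (Function.Involutive.bijective (fun p => by simp))
      (fun k p => keyS _ _ _ _ p)
    exact le_trans hres (le_of_eq (congrArg Set.ncard hEq))
  · -- right side x = B
    have hx : ∀ p ∈ Rect (a i) (b i) (c i) (d i) ∩ frontier (Rect A B C D), p.1 = B :=
      fun p hp => (hSsub hp).1
    have hbi : b i = B := le_antisymm hbB (by have := hx p0 ⟨hp0R, hp0F⟩; linarith [hp0big.2.1])
    have hci : C < c i := by
      rcases lt_or_eq_of_le hCc with h' | h'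
      · exact h'
      · exfalso
        refine hcor (B, C) ⟨mem_rect'.2 ⟨by linarith, hbi.ge, h'.ge, by linarith⟩,
          hfrmem B C hAB.le (le_refl _) (le_refl _) hCD.le (Or.inr (Or.inl rfl))⟩ ?_
        simp
    have hdi : d i < D := by
      rcases lt_or_eq_of_le hdD with h' | h'
      · exact h'
      · exfalso
        refine hcor (B, D) ⟨mem_rect'.2 ⟨by linarith, hbi.ge, by linarith, h'.ge⟩,
          hfrmem B D hAB.le (le_refl _) hCD.le (le_refl _) (Or.inr (Or.inl rfl))⟩ ?_
        simp
    have hai : A < a i := by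
      rcases lt_or_eq_of_le hAa with h' | h'
      · exact h'
      · exfalso
        have hmem : ((A, c i) : ℝ × ℝ) ∈ Rect (a i) (b i) (c i) (d i) ∩
            frontier (Rect A B C D) :=
          ⟨mem_rect'.2 ⟨h'.ge, by linarith, le_refl _, hcd.le⟩,
            hfrmem A (c i) (le_refl _) hAB.le hCc (by linarith) (Or.inl rfl)⟩
        have := hx _ hmem
        simp only at this
        linarith
    have hres := core C D (-B) (-A) c d (fun k => -(b k)) (fun k => -(a k))
      (IsRFP_negY (IsRFP_swap h)) i (by simp [hbi]) hci hdi (by simp; linarith)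
    have hEq := ncard_adj_eq a b c d c d (fun k => -(b k)) (fun k => -(a k)) i
      (fun p : ℝ × ℝ => ((-p.2, p.1) : ℝ × ℝ))
      (Function.bijective_iff_has_inverse.2
        ⟨fun q => (q.2, -q.1), fun p => by simp, fun q => by simp⟩)
      (fun k p => (keyY (c k) (d k) (a k) (b k) p).trans (keyS _ _ _ _ _))
    exact le_trans hres (le_of_eq (congrArg Set.ncard hEq))
end

section
/- Let R_1, …, R_n be a rectangular floorplan of a rectangle R = [A,B] × [C,D], and let p be a point in the interior of R that belongs to exactly three rectangles R_i, R_j, R_k of the floorplan (a 3-joint). Then R_i, R_j, R_k are pairwise adjacent: each of the three pairwise intersections R_i ∩ R_j, R_j ∩ R_k, R_i ∩ R_k contains more than one point. -/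
open Set

lemma mem_Rect {a b c d : ℝ} {q : ℝ × ℝ} :
    q ∈ Rect a b c d ↔ (a ≤ q.1 ∧ q.1 ≤ b) ∧ (c ≤ q.2 ∧ q.2 ≤ d) := by
  simp [Rect, Set.mem_prod, Set.mem_Icc, Prod.le_def]
  tauto

lemma key {n : ℕ} (A B C D : ℝ) (a b c d : Fin n → ℝ)
    (h : IsRFP A B C D a b c d) (p : ℝ × ℝ)
    (hp : p ∈ interior (Rect A B C D))
    (u v w : Fin n) (huw : u ≠ w)
    (hmem : ∀ l, p ∈ Rect (a l) (b l) (c l) (d l) → l = u ∨ l = v ∨ l = w)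
    (hau : a u = p.1) (hbv : b v = p.1)
    (hy : (c u = p.2 ∧ d v = p.2) ∨ (d u = p.2 ∧ c v = p.2)) : False := by
  obtain ⟨hAB, hCD, hnd, hcov, hdisj, h4⟩ := h
  have hclosed : ∀ l : Fin n, IsClosed (Rect (a l) (b l) (c l) (d l)) :=
    fun l => isClosed_Icc.prod isClosed_Icc
  set U : Set (ℝ × ℝ) := interior (Rect A B C D) ∩
    ⋂ l ∈ {l : Fin n | p ∉ Rect (a l) (b l) (c l) (d l)},
      (Rect (a l) (b l) (c l) (d l))ᶜ with hU
  have hUopen : IsOpen U := by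
    apply IsOpen.inter isOpen_interior
    exact Set.Finite.isOpen_biInter (Set.toFinite _)
      (fun l _ => (hclosed l).isOpen_compl)
  have hpU : p ∈ U := by
    refine ⟨hp, ?_⟩
    rw [Set.mem_iInter₂]
    intro l hl
    exact hl
  obtain ⟨ε, hε, hball⟩ := Metric.isOpen_iff.mp hUopen p hpU
  have hw : ∀ q : ℝ × ℝ, dist q p < ε → q ∉ Rect (a u) (b u) (c u) (d u) →
      q ∉ Rect (a v) (b v) (c v) (d v) → q ∈ Rect (a w) (b w) (c w) (d w) := by
    intro q hq hqu hqv
    have hqU : q ∈ U := hball (Metric.mem_ball.mpr hq)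
    have hqR : q ∈ Rect A B C D := interior_subset hqU.1
    rw [← hcov] at hqR
    obtain ⟨l, hl⟩ := Set.mem_iUnion.mp hqR
    have hpl : p ∈ Rect (a l) (b l) (c l) (d l) := by
      by_contra hpl
      exact (Set.mem_iInter₂.mp hqU.2 l hpl) hl
    rcases hmem l hpl with rfl | rfl | rfl
    · exact absurd hl hqu
    · exact absurd hl hqv
    · exact hl
  -- common facts
  have hub := (hnd u).1
  have huc := (hnd u).2
  set t := ε / 2 with ht
  have ht0 : 0 < t := by positivity
  have htε : t < ε := by linarith
  have hdist : ∀ x y : ℝ, |x| ≤ t → |y| ≤ t → dist (p.1 + x, p.2 + y) p < ε := by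
    intro x y hx hy
    rw [Prod.dist_eq]
    simp only [Real.dist_eq]
    rw [show p.1 + x - p.1 = x from by ring, show p.2 + y - p.2 = y from by ring]
    exact max_lt (lt_of_le_of_lt hx htε) (lt_of_le_of_lt hy htε)
  have habs : |t| ≤ t := by rw [abs_of_pos ht0]
  have habs' : |(-t : ℝ)| ≤ t := by rw [abs_neg, abs_of_pos ht0]
  have memw : ∀ x y : ℝ, (p.1 + x, p.2 + y) ∈ Rect (a w) (b w) (c w) (d w) →
      a w ≤ p.1 + x ∧ p.1 + x ≤ b w ∧ c w ≤ p.2 + y ∧ p.2 + y ≤ d w := by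
    intro x y hq
    rw [mem_Rect] at hq
    exact ⟨hq.1.1, hq.1.2, hq.2.1, hq.2.2⟩
  have notmem : ∀ (a' b' c' d' x y : ℝ),
      (a' ≤ p.1 + x → p.1 + x ≤ b' → c' ≤ p.2 + y → p.2 + y ≤ d' → False) →
      (p.1 + x, p.2 + y) ∉ Rect a' b' c' d' := by
    intro a' b' c' d' x y hcon hq
    rw [mem_Rect] at hq
    exact hcon hq.1.1 hq.1.2 hq.2.1 hq.2.2
  -- the box of w contains a neighborhood-square of p
  have hwbox : a w ≤ p.1 - t ∧ p.1 + t ≤ b w ∧ c w ≤ p.2 - t ∧ p.2 + t ≤ d w := by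
    rcases hy with ⟨hcu, hdv⟩ | ⟨hdu, hcv⟩
    · have h1 := memw _ _ (hw (p.1 + t, p.2 + -t) (hdist _ _ habs habs')
        (notmem _ _ _ _ _ _ (fun _ _ h3 _ => by linarith))
        (notmem _ _ _ _ _ _ (fun _ h2 _ _ => by linarith)))
      have h2 := memw _ _ (hw (p.1 + -t, p.2 + t) (hdist _ _ habs' habs)
        (notmem _ _ _ _ _ _ (fun h1 _ _ _ => by linarith))
        (notmem _ _ _ _ _ _ (fun _ _ _ h4 => by linarith)))
      refine ⟨by linarith [h2.1], by linarith [h1.2.1], by linarith [h1.2.2.1],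
        by linarith [h2.2.2.2]⟩
    · have h1 := memw _ _ (hw (p.1 + t, p.2 + t) (hdist _ _ habs habs)
        (notmem _ _ _ _ _ _ (fun _ _ _ h4 => by linarith))
        (notmem _ _ _ _ _ _ (fun _ h2 _ _ => by linarith)))
      have h2 := memw _ _ (hw (p.1 + -t, p.2 + -t) (hdist _ _ habs' habs')
        (notmem _ _ _ _ _ _ (fun h1 _ _ _ => by linarith))
        (notmem _ _ _ _ _ _ (fun _ _ h3 _ => by linarith)))
      refine ⟨by linarith [h2.1], by linarith [h1.2.1], by linarith [h2.2.2.1],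
        by linarith [h1.2.2.2]⟩
  obtain ⟨hw1, hw2, hw3, hw4⟩ := hwbox
  -- contradiction point in the interiors of u and w
  have hdj : Disjoint (Set.Ioo (a u) (b u) ×ˢ Set.Ioo (c u) (d u))
      (Set.Ioo (a w) (b w) ×ˢ Set.Ioo (c w) (d w)) :=
    hdisj (Set.mem_univ u) (Set.mem_univ w) huw
  rw [Set.disjoint_left] at hdj
  have hgen : ∀ x y : ℝ, a u < p.1 + x → p.1 + x < b u → c u < p.2 + y → p.2 + y < d u →
      a w < p.1 + x → p.1 + x < b w → c w < p.2 + y → p.2 + y < d w → False := by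
    intro x y g1 g2 g3 g4 g5 g6 g7 g8
    exact hdj (a := (p.1 + x, p.2 + y)) ⟨Set.mem_Ioo.mpr ⟨g1, g2⟩, Set.mem_Ioo.mpr ⟨g3, g4⟩⟩
      ⟨Set.mem_Ioo.mpr ⟨g5, g6⟩, Set.mem_Ioo.mpr ⟨g7, g8⟩⟩
  rcases hy with ⟨hcu, hdv⟩ | ⟨hdu, hcv⟩
  · obtain ⟨s, hs0, hs1, hs2, hs3⟩ :
        ∃ s : ℝ, 0 < s ∧ s < b u - p.1 ∧ s < d u - p.2 ∧ s < t := by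
      have h1 : (0:ℝ) < b u - p.1 := by linarith [hau ▸ hub]
      have h2 : (0:ℝ) < d u - p.2 := by linarith [hcu ▸ huc]
      have hm0 : (0:ℝ) < min (min (b u - p.1) (d u - p.2)) t := by positivity
      have hm1 := min_le_left (min (b u - p.1) (d u - p.2)) t
      have hm2 := min_le_right (min (b u - p.1) (d u - p.2)) t
      have hm3 := min_le_left (b u - p.1) (d u - p.2)
      have hm4 := min_le_right (b u - p.1) (d u - p.2)
      exact ⟨min (min (b u - p.1) (d u - p.2)) t / 2, by positivity, by linarith,
        by linarith, by linarith⟩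
    exact hgen s s (by linarith) (by linarith) (by linarith) (by linarith)
      (by linarith) (by linarith) (by linarith) (by linarith)
  · obtain ⟨s, hs0, hs1, hs2, hs3⟩ :
        ∃ s : ℝ, 0 < s ∧ s < b u - p.1 ∧ s < p.2 - c u ∧ s < t := by
      have h1 : (0:ℝ) < b u - p.1 := by linarith [hau ▸ hub]
      have h2 : (0:ℝ) < p.2 - c u := by linarith [hdu ▸ huc]
      have hm0 : (0:ℝ) < min (min (b u - p.1) (p.2 - c u)) t := by positivity
      have hm1 := min_le_left (min (b u - p.1) (p.2 - c u)) t
      have hm2 := min_le_right (min (b u - p.1) (p.2 - c u)) t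
      have hm3 := min_le_left (b u - p.1) (p.2 - c u)
      have hm4 := min_le_right (b u - p.1) (p.2 - c u)
      exact ⟨min (min (b u - p.1) (p.2 - c u)) t / 2, by positivity, by linarith,
        by linarith, by linarith⟩
    exact hgen s (-s) (by linarith) (by linarith) (by linarith) (by linarith)
      (by linarith) (by linarith) (by linarith) (by linarith)

lemma pair_adj {n : ℕ} (A B C D : ℝ) (a b c d : Fin n → ℝ)
    (h : IsRFP A B C D a b c d) (p : ℝ × ℝ)
    (hp : p ∈ interior (Rect A B C D))
    (u v w : Fin n) (huw : u ≠ w) (hvw : v ≠ w)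
    (hmem : ∀ l, p ∈ Rect (a l) (b l) (c l) (d l) → l = u ∨ l = v ∨ l = w)
    (hpu : p ∈ Rect (a u) (b u) (c u) (d u))
    (hpv : p ∈ Rect (a v) (b v) (c v) (d v)) :
    (Rect (a u) (b u) (c u) (d u) ∩ Rect (a v) (b v) (c v) (d v)).Nontrivial := by
  by_contra hcon
  rw [Set.not_nontrivial_iff] at hcon
  have hndu := h.2.2.1 u
  have hndv := h.2.2.1 v
  have hps : p ∈ Rect (a u) (b u) (c u) (d u) ∩ Rect (a v) (b v) (c v) (d v) := ⟨hpu, hpv⟩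
  rw [mem_Rect] at hpu hpv
  have hmem' : ∀ l, p ∈ Rect (a l) (b l) (c l) (d l) → l = v ∨ l = u ∨ l = w := by
    intro l hl; rcases hmem l hl with h' | h' | h' <;> tauto
  -- the four extreme points of the intersection all equal p
  have P1 : (max (a u) (a v), p.2) ∈
      Rect (a u) (b u) (c u) (d u) ∩ Rect (a v) (b v) (c v) (d v) := by
    constructor <;> rw [mem_Rect]
    · exact ⟨⟨le_max_left _ _, le_trans (max_le hpu.1.1 hpv.1.1) hpu.1.2⟩, hpu.2⟩
    · exact ⟨⟨le_max_right _ _, le_trans (max_le hpu.1.1 hpv.1.1) hpv.1.2⟩, hpv.2⟩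
  have P2 : (min (b u) (b v), p.2) ∈
      Rect (a u) (b u) (c u) (d u) ∩ Rect (a v) (b v) (c v) (d v) := by
    constructor <;> rw [mem_Rect]
    · exact ⟨⟨le_trans hpu.1.1 (le_min hpu.1.2 hpv.1.2), min_le_left _ _⟩, hpu.2⟩
    · exact ⟨⟨le_trans hpv.1.1 (le_min hpu.1.2 hpv.1.2), min_le_right _ _⟩, hpv.2⟩
  have P3 : (p.1, max (c u) (c v)) ∈
      Rect (a u) (b u) (c u) (d u) ∩ Rect (a v) (b v) (c v) (d v) := by
    constructor <;> rw [mem_Rect]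
    · exact ⟨hpu.1, le_max_left _ _, le_trans (max_le hpu.2.1 hpv.2.1) hpu.2.2⟩
    · exact ⟨hpv.1, le_max_right _ _, le_trans (max_le hpu.2.1 hpv.2.1) hpv.2.2⟩
  have P4 : (p.1, min (d u) (d v)) ∈
      Rect (a u) (b u) (c u) (d u) ∩ Rect (a v) (b v) (c v) (d v) := by
    constructor <;> rw [mem_Rect]
    · exact ⟨hpu.1, le_trans hpu.2.1 (le_min hpu.2.2 hpv.2.2), min_le_left _ _⟩
    · exact ⟨hpv.1, le_trans hpv.2.1 (le_min hpu.2.2 hpv.2.2), min_le_right _ _⟩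
  have e1 : max (a u) (a v) = p.1 := congrArg Prod.fst (hcon P1 hps)
  have e2 : min (b u) (b v) = p.1 := congrArg Prod.fst (hcon P2 hps)
  have e3 : max (c u) (c v) = p.2 := congrArg Prod.snd (hcon P3 hps)
  have e4 : min (d u) (d v) = p.2 := congrArg Prod.snd (hcon P4 hps)
  rcases max_choice (a u) (a v) with hx1 | hx1 <;>
    rcases min_choice (b u) (b v) with hx2 | hx2 <;>
    rcases max_choice (c u) (c v) with hy1 | hy1 <;>
    rcases min_choice (d u) (d v) with hy2 | hy2 <;>
    rw [hx1] at e1 <;> rw [hx2] at e2 <;> rw [hy1] at e3 <;> rw [hy2] at e4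
  · linarith [hndu.1]
  · linarith [hndu.1]
  · linarith [hndu.1]
  · linarith [hndu.1]
  · linarith [hndu.2]
  · exact key A B C D a b c d h p hp u v w huw hmem e1 e2 (Or.inl ⟨e3, e4⟩)
  · exact key A B C D a b c d h p hp u v w huw hmem e1 e2 (Or.inr ⟨e4, e3⟩)
  · linarith [hndv.2]
  · linarith [hndu.2]
  · exact key A B C D a b c d h p hp v u w hvw hmem' e1 e2 (Or.inr ⟨e4, e3⟩)
  · exact key A B C D a b c d h p hp v u w hvw hmem' e1 e2 (Or.inl ⟨e3, e4⟩)
  · linarith [hndv.2]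
  · linarith [hndv.1]
  · linarith [hndv.1]
  · linarith [hndv.1]
  · linarith [hndv.1]

/-- At a 3-joint in the interior of the big rectangle, the three rectangles
meeting there are pairwise adjacent. -/
theorem stmt_6 {n : ℕ} (A B C D : ℝ) (a b c d : Fin n → ℝ)
    (h : IsRFP A B C D a b c d) (p : ℝ × ℝ)
    (hp : p ∈ interior (Rect A B C D))
    (i j k : Fin n) (hij : i ≠ j) (hjk : j ≠ k) (hik : i ≠ k)
    (h3 : {l : Fin n | p ∈ Rect (a l) (b l) (c l) (d l)} = {i, j, k}) :
    (Rect (a i) (b i) (c i) (d i) ∩ Rect (a j) (b j) (c j) (d j)).Nontrivial ∧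
    (Rect (a j) (b j) (c j) (d j) ∩ Rect (a k) (b k) (c k) (d k)).Nontrivial ∧
    (Rect (a i) (b i) (c i) (d i) ∩ Rect (a k) (b k) (c k) (d k)).Nontrivial := by

  have hmem : ∀ l, p ∈ Rect (a l) (b l) (c l) (d l) → l = i ∨ l = j ∨ l = k := by
    intro l hl
    have h' : l ∈ ({i, j, k} : Set (Fin n)) := h3 ▸ hl
    simpa using h'
  have hpi : p ∈ Rect (a i) (b i) (c i) (d i) := by
    have h' : i ∈ ({i, j, k} : Set (Fin n)) := by simp
    rw [← h3] at h'; exact h'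
  have hpj : p ∈ Rect (a j) (b j) (c j) (d j) := by
    have h' : j ∈ ({i, j, k} : Set (Fin n)) := by simp
    rw [← h3] at h'; exact h'
  have hpk : p ∈ Rect (a k) (b k) (c k) (d k) := by
    have h' : k ∈ ({i, j, k} : Set (Fin n)) := by simp
    rw [← h3] at h'; exact h'
  refine ⟨pair_adj A B C D a b c d h p hp i j k hik hjk hmem hpi hpj,
    pair_adj A B C D a b c d h p hp j k i hij.symm hik.symm ?_ hpj hpk,
    pair_adj A B C D a b c d h p hp i k j hij hjk.symm ?_ hpi hpk⟩ <;>
  · intro l hl; rcases hmem l hl with h' | h' | h' <;> tauto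
end
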